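/- arXiv:2505.10065 — 6 statements merged into one kernel-verified Lean document; each statement's English description precedes it below -/
import Mathlib

section
/- Under the stated assumptions, for every Y ∈ ℕ the probability of not having moved by the end of interval (Y, Y+1] equals the censored-observation likelihood contribution of the dynamic mover-stayer model: μ(S_(Y+1) ≠ 3) = (1 − π) + π · ∏_{t=0}^{Y} p11(t) + π · ∑_{s=0}^{Y} p12(s) · ∏_{t=0}^{s-1} p11(t) (with the conventions that an empty product equals 1 and an empty sum equals 0). -/
open MeasureTheory Finset Filter

theorem censored_likelihood_contribution
    {Ω : Type*} [MeasurableSpace Ω] (μ : Measure Ω) [IsProbabilityMeasure μ]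
    (S : ℕ → Ω → ℕ) (hSmeas : ∀ t, Measurable (S t))
    (hSval : ∀ t ω, S t ω = 1 ∨ S t ω = 2 ∨ S t ω = 3)
    (π : ℝ) (hπ0 : 0 ≤ π) (hπ1 : π ≤ 1)
    (p12 p13 : ℕ → ℝ)
    (hp12 : ∀ t, 0 ≤ p12 t) (hp13 : ∀ t, 0 ≤ p13 t)
    (hsum : ∀ t, p12 t + p13 t ≤ 1)
    (p11 : ℕ → ℝ) (hp11 : ∀ t, p11 t = 1 - p12 t - p13 t)
    (hinit1 : (μ {ω | S 0 ω = 1}).toReal = π)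
    (hinit3 : μ {ω | S 0 ω = 3} = 0)
    (habs2 : ∀ t, μ ({ω | S t ω = 2} \ {ω | S (t + 1) ω = 2}) = 0)
    (habs3 : ∀ t, μ ({ω | S t ω = 3} \ {ω | S (t + 1) ω = 3}) = 0)
    (htrans12 : ∀ t, (μ {ω | S t ω = 1 ∧ S (t + 1) ω = 2}).toReal
      = p12 t * (μ {ω | S t ω = 1}).toReal)
    (htrans13 : ∀ t, (μ {ω | S t ω = 1 ∧ S (t + 1) ω = 3}).toReal
      = p13 t * (μ {ω | S t ω = 1}).toReal)
    (Y : ℕ) :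
    (μ {ω | S (Y + 1) ω ≠ 3}).toReal
      = (1 - π) + π * ∏ t ∈ Finset.range (Y + 1), p11 t
        + π * ∑ s ∈ Finset.range (Y + 1), p12 s * ∏ t ∈ Finset.range s, p11 t := by
  classical
  have mA : ∀ t, MeasurableSet {ω | S t ω = 1} :=
    fun t => hSmeas t (measurableSet_singleton 1)
  have mB : ∀ t, MeasurableSet {ω | S t ω = 2} :=
    fun t => hSmeas t (measurableSet_singleton 2)
  have mC : ∀ t, MeasurableSet {ω | S t ω = 3} :=
    fun t => hSmeas t (measurableSet_singleton 3)
  -- splitting lemma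
  have hsplit : ∀ (t : ℕ) (D : Set Ω), MeasurableSet D →
      (μ D).toReal = (μ (D ∩ {ω | S t ω = 1})).toReal
        + (μ (D ∩ {ω | S t ω = 2})).toReal + (μ (D ∩ {ω | S t ω = 3})).toReal := by
    intro t D hD
    have hcov : D = ((D ∩ {ω | S t ω = 1}) ∪ (D ∩ {ω | S t ω = 2}))
        ∪ (D ∩ {ω | S t ω = 3}) := by
      ext ω
      simp only [Set.mem_union, Set.mem_inter_iff, Set.mem_setOf_eq]
      constructor
      · intro h
        rcases hSval t ω with h1 | h2 | h3
        · exact Or.inl (Or.inl ⟨h, h1⟩)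
        · exact Or.inl (Or.inr ⟨h, h2⟩)
        · exact Or.inr ⟨h, h3⟩
      · rintro ((⟨h, _⟩ | ⟨h, _⟩) | ⟨h, _⟩) <;> exact h
    have d1 : Disjoint (D ∩ {ω | S t ω = 1}) (D ∩ {ω | S t ω = 2}) := by
      rw [Set.disjoint_left]
      rintro ω ⟨_, h1⟩ ⟨_, h2⟩
      simp only [Set.mem_setOf_eq] at h1 h2
      omega
    have d2 : Disjoint ((D ∩ {ω | S t ω = 1}) ∪ (D ∩ {ω | S t ω = 2}))
        (D ∩ {ω | S t ω = 3}) := by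
      rw [Set.disjoint_left]
      rintro ω (⟨_, h1⟩ | ⟨_, h1⟩) ⟨_, h3⟩ <;>
        simp only [Set.mem_setOf_eq] at h1 h3 <;> omega
    have e : μ D = μ (D ∩ {ω | S t ω = 1}) + μ (D ∩ {ω | S t ω = 2})
        + μ (D ∩ {ω | S t ω = 3}) := by
      conv_lhs => rw [hcov]
      rw [measure_union d2 (hD.inter (mC t)), measure_union d1 (hD.inter (mB t))]
    rw [e, ENNReal.toReal_add (ENNReal.add_ne_top.2
        ⟨measure_ne_top μ _, measure_ne_top μ _⟩) (measure_ne_top μ _),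
      ENNReal.toReal_add (measure_ne_top μ _) (measure_ne_top μ _)]
  -- recursion for state 1
  have ha : ∀ t, (μ {ω | S (t + 1) ω = 1}).toReal
      = p11 t * (μ {ω | S t ω = 1}).toReal := by
    intro t
    have n2 : μ ({ω | S (t + 1) ω = 1} ∩ {ω | S t ω = 2}) = 0 := by
      refine measure_mono_null (fun ω hω => ?_) (habs2 t)
      obtain ⟨h1, h2⟩ := hω
      exact ⟨h2, fun h => by simp only [Set.mem_setOf_eq] at h1 h; omega⟩
    have n3 : μ ({ω | S (t + 1) ω = 1} ∩ {ω | S t ω = 3}) = 0 := by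
      refine measure_mono_null (fun ω hω => ?_) (habs3 t)
      obtain ⟨h1, h2⟩ := hω
      exact ⟨h2, fun h => by simp only [Set.mem_setOf_eq] at h1 h; omega⟩
    have e1 := hsplit t {ω | S (t + 1) ω = 1} (mA (t + 1))
    rw [n2, n3] at e1
    simp only [ENNReal.toReal_zero, add_zero] at e1
    rw [Set.inter_comm {ω | S (t + 1) ω = 1} {ω | S t ω = 1}] at e1
    have e2 := hsplit (t + 1) {ω | S t ω = 1} (mA t)
    have h12 : (μ ({ω | S t ω = 1} ∩ {ω | S (t + 1) ω = 2})).toReal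
        = p12 t * (μ {ω | S t ω = 1}).toReal := by
      rw [← Set.setOf_and]; exact htrans12 t
    have h13 : (μ ({ω | S t ω = 1} ∩ {ω | S (t + 1) ω = 3})).toReal
        = p13 t * (μ {ω | S t ω = 1}).toReal := by
      rw [← Set.setOf_and]; exact htrans13 t
    rw [h12, h13] at e2
    rw [hp11 t]
    linear_combination e1 - e2
  -- recursion for state 3
  have hc : ∀ t, (μ {ω | S (t + 1) ω = 3}).toReal
      = (μ {ω | S t ω = 3}).toReal + p13 t * (μ {ω | S t ω = 1}).toReal := by
    intro t
    have n2 : μ ({ω | S (t + 1) ω = 3} ∩ {ω | S t ω = 2}) = 0 := by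
      refine measure_mono_null (fun ω hω => ?_) (habs2 t)
      obtain ⟨h1, h2⟩ := hω
      exact ⟨h2, fun h => by simp only [Set.mem_setOf_eq] at h1 h; omega⟩
    have e3 : μ ({ω | S (t + 1) ω = 3} ∩ {ω | S t ω = 3}) = μ {ω | S t ω = 3} := by
      rw [Set.inter_comm]
      have h := measure_inter_add_diff (μ := μ) {ω | S t ω = 3} (mC (t + 1))
      rw [habs3 t, add_zero] at h
      exact h
    have e1 := hsplit t {ω | S (t + 1) ω = 3} (mC (t + 1))
    rw [n2, e3] at e1
    rw [Set.inter_comm {ω | S (t + 1) ω = 3} {ω | S t ω = 1}] at e1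
    have h13 : (μ ({ω | S t ω = 1} ∩ {ω | S (t + 1) ω = 3})).toReal
        = p13 t * (μ {ω | S t ω = 1}).toReal := by
      rw [← Set.setOf_and]; exact htrans13 t
    rw [h13] at e1
    simp only [ENNReal.toReal_zero, add_zero] at e1
    linarith [e1]
  -- closed forms
  have haF : ∀ t, (μ {ω | S t ω = 1}).toReal = π * ∏ r ∈ Finset.range t, p11 r := by
    intro t
    induction t with
    | zero => simpa using hinit1
    | succ n ih => rw [ha n, ih, Finset.prod_range_succ]; ring
  have hcF : ∀ t, (μ {ω | S t ω = 3}).toReal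
      = π * ∑ s ∈ Finset.range t, p13 s * ∏ r ∈ Finset.range s, p11 r := by
    intro t
    induction t with
    | zero => simp [hinit3]
    | succ n ih => rw [hc n, ih, haF n, Finset.sum_range_succ]; ring
  -- complement
  have hcompl : (μ {ω | S (Y + 1) ω ≠ 3}).toReal
      = 1 - (μ {ω | S (Y + 1) ω = 3}).toReal := by
    have hset : {ω | S (Y + 1) ω ≠ 3} = {ω | S (Y + 1) ω = 3}ᶜ := rfl
    rw [hset, measure_compl (mC (Y + 1)) (measure_ne_top μ _), measure_univ,
      ENNReal.toReal_sub_of_le prob_le_one ENNReal.one_ne_top, ENNReal.toReal_one]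
  -- algebraic identity
  have key : ∀ n : ℕ, ∏ r ∈ Finset.range n, p11 r
      + ∑ s ∈ Finset.range n, p12 s * ∏ r ∈ Finset.range s, p11 r
      + ∑ s ∈ Finset.range n, p13 s * ∏ r ∈ Finset.range s, p11 r = 1 := by
    intro n
    induction n with
    | zero => simp
    | succ m ih =>
      rw [Finset.prod_range_succ, Finset.sum_range_succ, Finset.sum_range_succ, hp11 m]
      linear_combination ih
  rw [hcompl, hcF (Y + 1)]
  linear_combination (-π) * key (Y + 1)
end

section
/- Under the stated assumptions, for every Y ∈ ℕ such that D := μ(S_(Y+1) ≠ 3) > 0, the conditional probability of having been initially at risk given that no move has occurred by the end of interval (Y, Y+1] equals the E-step weight of the EM algorithm: μ(S_0 = 1 | S_(Y+1) ≠ 3) = (π · ∏_{t=0}^{Y} p11(t) + π · ∑_{s=0}^{Y} p12(s) · ∏_{t=0}^{s-1} p11(t)) / ((1 − π) + π · ∏_{t=0}^{Y} p11(t) + π · ∑_{s=0}^{Y} p12(s) · ∏_{t=0}^{s-1} p11(t)). -/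
open MeasureTheory Finset Filter

private lemma inter_eq_of_diff_null' {Ω : Type*} [MeasurableSpace Ω] (μ : Measure Ω)
    {X Y : Set Ω} (h : μ (X \ Y) = 0) : μ (X ∩ Y) = μ X := by
  refine le_antisymm (measure_mono Set.inter_subset_left) ?_
  calc μ X ≤ μ (X ∩ Y) + μ (X \ Y) := measure_le_inter_add_diff μ X Y
    _ = μ (X ∩ Y) := by rw [h, add_zero]

theorem EM_weight_W
    {Ω : Type*} [MeasurableSpace Ω] (μ : Measure Ω) [IsProbabilityMeasure μ]
    (S : ℕ → Ω → ℕ) (hSmeas : ∀ t, Measurable (S t))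
    (hSval : ∀ t ω, S t ω = 1 ∨ S t ω = 2 ∨ S t ω = 3)
    (π : ℝ) (hπ0 : 0 ≤ π) (hπ1 : π ≤ 1)
    (p12 p13 : ℕ → ℝ)
    (hp12 : ∀ t, 0 ≤ p12 t) (hp13 : ∀ t, 0 ≤ p13 t)
    (hsum : ∀ t, p12 t + p13 t ≤ 1)
    (p11 : ℕ → ℝ) (hp11 : ∀ t, p11 t = 1 - p12 t - p13 t)
    (hinit1 : (μ {ω | S 0 ω = 1}).toReal = π)
    (hinit3 : μ {ω | S 0 ω = 3} = 0)
    (habs2 : ∀ t, μ ({ω | S t ω = 2} \ {ω | S (t + 1) ω = 2}) = 0)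
    (habs3 : ∀ t, μ ({ω | S t ω = 3} \ {ω | S (t + 1) ω = 3}) = 0)
    (htrans12 : ∀ t, (μ {ω | S t ω = 1 ∧ S (t + 1) ω = 2}).toReal
      = p12 t * (μ {ω | S t ω = 1}).toReal)
    (htrans13 : ∀ t, (μ {ω | S t ω = 1 ∧ S (t + 1) ω = 3}).toReal
      = p13 t * (μ {ω | S t ω = 1}).toReal)
    (Y : ℕ) (hD : 0 < (μ {ω | S (Y + 1) ω ≠ 3}).toReal) :
    (μ ({ω | S 0 ω = 1} ∩ {ω | S (Y + 1) ω ≠ 3})).toReal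
        / (μ {ω | S (Y + 1) ω ≠ 3}).toReal
      = (π * ∏ t ∈ Finset.range (Y + 1), p11 t
          + π * ∑ s ∈ Finset.range (Y + 1), p12 s * ∏ t ∈ Finset.range s, p11 t)
        / ((1 - π) + π * ∏ t ∈ Finset.range (Y + 1), p11 t
          + π * ∑ s ∈ Finset.range (Y + 1), p12 s * ∏ t ∈ Finset.range s, p11 t) := by
  set A : ℕ → Set Ω := fun t => {ω | S t ω = 1} with hAdef
  set B : ℕ → Set Ω := fun t => {ω | S t ω = 2} with hBdef
  set C : ℕ → Set Ω := fun t => {ω | S t ω = 3} with hCdef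
  have hmA : ∀ t, MeasurableSet (A t) := fun t => (hSmeas t) (measurableSet_singleton 1)
  have hmB : ∀ t, MeasurableSet (B t) := fun t => (hSmeas t) (measurableSet_singleton 2)
  have hmC : ∀ t, MeasurableSet (C t) := fun t => (hSmeas t) (measurableSet_singleton 3)
  -- a.e. facts
  have hAprev : ∀ t, μ (A (t + 1) \ A t) = 0 := by
    intro t
    refine measure_mono_null ?_ (measure_union_null (habs2 t) (habs3 t))
    rintro ω ⟨h1, h2⟩
    rcases hSval t ω with h | h | h
    · exact absurd h h2
    · left; exact ⟨h, fun hb => by simp only [hAdef, hBdef, Set.mem_setOf_eq] at h1 hb; omega⟩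
    · right; exact ⟨h, fun hc => by simp only [hAdef, hCdef, Set.mem_setOf_eq] at h1 hc; omega⟩
  have hA0 : ∀ t, μ (A t \ A 0) = 0 := by
    intro t
    induction t with
    | zero => simp
    | succ t ih =>
      refine measure_mono_null ?_ (measure_union_null (hAprev t) ih)
      rintro ω ⟨h1, h2⟩
      by_cases hω : ω ∈ A t
      · right; exact ⟨hω, h2⟩
      · left; exact ⟨h1, hω⟩
  have hB0 : ∀ t, μ (B 0 \ B t) = 0 := by
    intro t
    induction t with
    | zero => simp
    | succ t ih =>
      refine measure_mono_null ?_ (measure_union_null ih (habs2 t))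
      rintro ω ⟨h1, h2⟩
      by_cases hω : ω ∈ B t
      · right; exact ⟨hω, h2⟩
      · left; exact ⟨h1, hω⟩
  have hCB : ∀ t, μ (C t ∩ B (t + 1)) = 0 := by
    intro t
    refine measure_mono_null ?_ (habs3 t)
    rintro ω ⟨h1, h2⟩
    refine ⟨h1, fun hc => ?_⟩
    simp only [hBdef, hCdef, Set.mem_setOf_eq] at h2 hc; omega
  -- partition of a measurable set X by the value of S t
  have hpart : ∀ (t : ℕ) (X : Set Ω), MeasurableSet X →
      (μ X).toReal = (μ (X ∩ A t)).toReal + (μ (X ∩ B t)).toReal + (μ (X ∩ C t)).toReal := by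
    intro t X hX
    have hcover : X = (X ∩ A t) ∪ (X ∩ B t) ∪ (X ∩ C t) := by
      ext ω
      simp only [Set.mem_union, Set.mem_inter_iff, hAdef, hBdef, hCdef, Set.mem_setOf_eq]
      constructor
      · intro h; rcases hSval t ω with h1 | h1 | h1
        · exact Or.inl (Or.inl ⟨h, h1⟩)
        · exact Or.inl (Or.inr ⟨h, h1⟩)
        · exact Or.inr ⟨h, h1⟩
      · rintro ((⟨h, _⟩ | ⟨h, _⟩) | ⟨h, _⟩) <;> exact h
    have hd1 : Disjoint (X ∩ A t) (X ∩ B t) := by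
      rw [Set.disjoint_left]
      rintro ω ⟨_, h1⟩ ⟨_, h2⟩
      simp only [hAdef, hBdef, Set.mem_setOf_eq] at h1 h2; omega
    have hd2 : Disjoint ((X ∩ A t) ∪ (X ∩ B t)) (X ∩ C t) := by
      rw [Set.disjoint_left]
      rintro ω (⟨_, h1⟩ | ⟨_, h1⟩) ⟨_, h2⟩ <;>
        simp only [hAdef, hBdef, hCdef, Set.mem_setOf_eq] at h1 h2 <;> omega
    have hm : μ X = μ (X ∩ A t) + μ (X ∩ B t) + μ (X ∩ C t) := by
      conv_lhs => rw [hcover]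
      rw [measure_union hd2 (hX.inter (hmC t)), measure_union hd1 (hX.inter (hmB t))]
    rw [hm, ENNReal.toReal_add (by finiteness) (by finiteness),
      ENNReal.toReal_add (by finiteness) (by finiteness)]
  -- identify transition sets
  have hAB : ∀ t, A t ∩ B (t + 1) = {ω | S t ω = 1 ∧ S (t + 1) ω = 2} := by
    intro t; ext ω; simp [hAdef, hBdef, Set.mem_setOf_eq]
  have hAC : ∀ t, A t ∩ C (t + 1) = {ω | S t ω = 1 ∧ S (t + 1) ω = 3} := by
    intro t; ext ω; simp [hAdef, hCdef, Set.mem_setOf_eq]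
  -- a(t) = π ∏ p11
  have ha : ∀ t, (μ (A t)).toReal = π * ∏ i ∈ Finset.range t, p11 i := by
    intro t
    induction t with
    | zero => simpa using hinit1
    | succ t ih =>
      have h1 : μ (A t ∩ A (t + 1)) = μ (A (t + 1)) := by
        rw [Set.inter_comm]; exact inter_eq_of_diff_null' μ (hAprev t)
      have h2 := hpart (t + 1) (A t) (hmA t)
      rw [h1] at h2
      rw [hAB t] at h2
      rw [hAC t] at h2
      rw [htrans12 t, htrans13 t, ih] at h2
      rw [Finset.prod_range_succ, hp11 t]
      nlinarith [h2]
  -- b(t) = μ (B t ∩ A 0)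
  have hb : ∀ t, (μ (B t ∩ A 0)).toReal
      = π * ∑ s ∈ Finset.range t, p12 s * ∏ i ∈ Finset.range s, p11 i := by
    intro t
    induction t with
    | zero =>
      have : B 0 ∩ A 0 = ∅ := by
        ext ω; simp only [Set.mem_inter_iff, hAdef, hBdef, Set.mem_setOf_eq, Set.mem_empty_iff_false,
          iff_false, not_and]
        omega
      rw [this]; simp
    | succ t ih =>
      have h := hpart t (B (t + 1) ∩ A 0) ((hmB (t + 1)).inter (hmA 0))
      -- piece with A t
      have e1 : (μ (B (t + 1) ∩ A 0 ∩ A t)).toReal = (μ (A t ∩ B (t + 1))).toReal := by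
        have k1 : μ ((A t ∩ B (t + 1)) ∩ (B (t + 1) ∩ A 0 ∩ A t))
            = μ (A t ∩ B (t + 1)) := by
          apply inter_eq_of_diff_null'
          refine measure_mono_null ?_ (hA0 t)
          rintro ω ⟨⟨h1, h2⟩, h3⟩
          refine ⟨h1, fun h0 => h3 ⟨⟨h2, h0⟩, h1⟩⟩
        have k2 : (A t ∩ B (t + 1)) ∩ (B (t + 1) ∩ A 0 ∩ A t) = B (t + 1) ∩ A 0 ∩ A t := by
          ext ω
          constructor
          · rintro ⟨_, h⟩; exact h
          · rintro ⟨⟨h1, h2⟩, h3⟩; exact ⟨⟨h3, h1⟩, ⟨h1, h2⟩, h3⟩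
        rw [k2] at k1; rw [k1]
      -- piece with B t
      have e2 : μ (B (t + 1) ∩ A 0 ∩ B t) = μ (B t ∩ A 0) := by
        have k1 : μ ((B t ∩ A 0) ∩ (B (t + 1) ∩ A 0 ∩ B t)) = μ (B t ∩ A 0) := by
          apply inter_eq_of_diff_null'
          refine measure_mono_null ?_ (habs2 t)
          rintro ω ⟨⟨h1, h2⟩, h3⟩
          exact ⟨h1, fun hB1 => h3 ⟨⟨hB1, h2⟩, h1⟩⟩
        have k2 : (B t ∩ A 0) ∩ (B (t + 1) ∩ A 0 ∩ B t) = B (t + 1) ∩ A 0 ∩ B t := by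
          ext ω
          constructor
          · rintro ⟨_, h⟩; exact h
          · rintro ⟨⟨h1, h2⟩, h3⟩; exact ⟨⟨h3, h2⟩, ⟨h1, h2⟩, h3⟩
        rw [k2] at k1; rw [k1]
      -- piece with C t is null
      have e3 : μ (B (t + 1) ∩ A 0 ∩ C t) = 0 := by
        refine measure_mono_null ?_ (hCB t)
        rintro ω ⟨⟨h1, _⟩, h3⟩; exact ⟨h3, h1⟩
      rw [e1, e2, e3] at h
      rw [hAB t, htrans12 t, ha t, ih] at h
      rw [Finset.sum_range_succ]
      simp only [ENNReal.toReal_zero] at h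
      linarith [h]
  -- μ (B 0) = 1 - π
  have hB0val : (μ (B 0)).toReal = 1 - π := by
    have h := hpart 0 Set.univ MeasurableSet.univ
    simp only [Set.univ_inter] at h
    rw [hinit3, hinit1] at h
    simp only [measure_univ, ENNReal.toReal_one, ENNReal.toReal_zero] at h
    linarith
  -- denominator set
  have hNeq : {ω | S (Y + 1) ω ≠ 3} = A (Y + 1) ∪ B (Y + 1) := by
    ext ω
    simp only [Set.mem_setOf_eq, Set.mem_union, hAdef, hBdef]
    rcases hSval (Y + 1) ω with h | h | h <;> simp [h]
  -- μ (B (Y+1))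
  have hBY : (μ (B (Y + 1))).toReal
      = π * (∑ s ∈ Finset.range (Y + 1), p12 s * ∏ i ∈ Finset.range s, p11 i) + (1 - π) := by
    have h := hpart 0 (B (Y + 1)) (hmB (Y + 1))
    have e2 : μ (B (Y + 1) ∩ B 0) = μ (B 0) := by
      rw [Set.inter_comm]; exact inter_eq_of_diff_null' μ (hB0 (Y + 1))
    have e3 : μ (B (Y + 1) ∩ C 0) ≤ μ (C 0) := measure_mono Set.inter_subset_right
    have e3' : μ (B (Y + 1) ∩ C 0) = 0 := le_antisymm (by rw [← hinit3]; exact e3) (zero_le)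
    rw [e2, e3', hb (Y + 1)] at h
    rw [h, hB0val]
    simp
  -- numerator
  have hNum : (μ ({ω | S 0 ω = 1} ∩ {ω | S (Y + 1) ω ≠ 3})).toReal
      = π * ∏ t ∈ Finset.range (Y + 1), p11 t
        + π * ∑ s ∈ Finset.range (Y + 1), p12 s * ∏ t ∈ Finset.range s, p11 t := by
    have hset : {ω | S 0 ω = 1} ∩ {ω | S (Y + 1) ω ≠ 3}
        = (A 0 ∩ A (Y + 1)) ∪ (B (Y + 1) ∩ A 0) := by
      rw [hNeq]
      ext ω
      simp only [Set.mem_inter_iff, Set.mem_union, hAdef, Set.mem_setOf_eq]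
      tauto
    have hd : Disjoint (A 0 ∩ A (Y + 1)) (B (Y + 1) ∩ A 0) := by
      rw [Set.disjoint_left]
      rintro ω ⟨_, h1⟩ ⟨h2, _⟩
      simp only [hAdef, hBdef, Set.mem_setOf_eq] at h1 h2; omega
    have e1 : μ (A 0 ∩ A (Y + 1)) = μ (A (Y + 1)) := by
      rw [Set.inter_comm]; exact inter_eq_of_diff_null' μ (hA0 (Y + 1))
    rw [hset, measure_union hd ((hmB (Y + 1)).inter (hmA 0)),
      ENNReal.toReal_add (by finiteness) (by finiteness), e1, ha (Y + 1), hb (Y + 1)]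
  -- denominator
  have hDen : (μ {ω | S (Y + 1) ω ≠ 3}).toReal
      = (1 - π) + π * ∏ t ∈ Finset.range (Y + 1), p11 t
        + π * ∑ s ∈ Finset.range (Y + 1), p12 s * ∏ t ∈ Finset.range s, p11 t := by
    have hd : Disjoint (A (Y + 1)) (B (Y + 1)) := by
      rw [Set.disjoint_left]
      intro ω h1 h2
      simp only [hAdef, hBdef, Set.mem_setOf_eq] at h1 h2; omega
    rw [hNeq, measure_union hd (hmB (Y + 1)),
      ENNReal.toReal_add (by finiteness) (by finiteness), ha (Y + 1), hBY]
    ring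
  rw [hNum, hDen]
end

section
/- Under the stated assumptions, for every Y ∈ ℕ with D := μ(S_(Y+1) ≠ 3) > 0 and every r ≤ Y, the conditional probability of having transitioned from the at-risk state to the stayer state during (r, r+1], given that no move has occurred by the end of interval (Y, Y+1], equals the E-step quantity Q(r) of the EM algorithm: μ(S_r = 1 ∧ S_(r+1) = 2 | S_(Y+1) ≠ 3) = (π · p12(r) · ∏_{t=0}^{r-1} p11(t)) / ((1 − π) + π · ∏_{t=0}^{Y} p11(t) + π · ∑_{s=0}^{Y} p12(s) · ∏_{t=0}^{s-1} p11(t)). -/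
open MeasureTheory Finset Filter

theorem EM_weight_Q
    {Ω : Type*} [MeasurableSpace Ω] (μ : Measure Ω) [IsProbabilityMeasure μ]
    (S : ℕ → Ω → ℕ) (hSmeas : ∀ t, Measurable (S t))
    (hSval : ∀ t ω, S t ω = 1 ∨ S t ω = 2 ∨ S t ω = 3)
    (π : ℝ) (hπ0 : 0 ≤ π) (hπ1 : π ≤ 1)
    (p12 p13 : ℕ → ℝ)
    (hp12 : ∀ t, 0 ≤ p12 t) (hp13 : ∀ t, 0 ≤ p13 t)
    (hsum : ∀ t, p12 t + p13 t ≤ 1)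
    (p11 : ℕ → ℝ) (hp11 : ∀ t, p11 t = 1 - p12 t - p13 t)
    (hinit1 : (μ {ω | S 0 ω = 1}).toReal = π)
    (hinit3 : μ {ω | S 0 ω = 3} = 0)
    (habs2 : ∀ t, μ ({ω | S t ω = 2} \ {ω | S (t + 1) ω = 2}) = 0)
    (habs3 : ∀ t, μ ({ω | S t ω = 3} \ {ω | S (t + 1) ω = 3}) = 0)
    (htrans12 : ∀ t, (μ {ω | S t ω = 1 ∧ S (t + 1) ω = 2}).toReal
      = p12 t * (μ {ω | S t ω = 1}).toReal)
    (htrans13 : ∀ t, (μ {ω | S t ω = 1 ∧ S (t + 1) ω = 3}).toReal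
      = p13 t * (μ {ω | S t ω = 1}).toReal)
    (Y : ℕ) (hD : 0 < (μ {ω | S (Y + 1) ω ≠ 3}).toReal)
    (r : ℕ) (hr : r ≤ Y) :
    (μ ({ω | S r ω = 1 ∧ S (r + 1) ω = 2} ∩ {ω | S (Y + 1) ω ≠ 3})).toReal
        / (μ {ω | S (Y + 1) ω ≠ 3}).toReal
      = (π * p12 r * ∏ t ∈ Finset.range r, p11 t)
        / ((1 - π) + π * ∏ t ∈ Finset.range (Y + 1), p11 t
          + π * ∑ s ∈ Finset.range (Y + 1), p12 s * ∏ t ∈ Finset.range s, p11 t) := by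
  have hm : ∀ t (j : ℕ), MeasurableSet {ω | S t ω = j} := fun t j =>
    (hSmeas t) (measurableSet_singleton j)
  -- splitting lemma
  have hsplit : ∀ (u : ℕ) (E : Set Ω),
      (μ E).toReal = (μ (E ∩ {ω | S u ω = 1})).toReal
        + (μ (E ∩ {ω | S u ω = 2})).toReal + (μ (E ∩ {ω | S u ω = 3})).toReal := by
    intro u E
    have h1 := measure_inter_add_diff (μ := μ) E (hm u 1)
    have h2 := measure_inter_add_diff (μ := μ) (E \ {ω | S u ω = 1}) (hm u 2)
    have e2 : (E \ {ω | S u ω = 1}) ∩ {ω | S u ω = 2} = E ∩ {ω | S u ω = 2} := by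
      ext ω
      simp only [Set.mem_inter_iff, Set.mem_diff, Set.mem_setOf_eq]
      constructor
      · rintro ⟨⟨hE, _⟩, h2⟩; exact ⟨hE, h2⟩
      · rintro ⟨hE, h2⟩; exact ⟨⟨hE, by omega⟩, h2⟩
    have e3 : (E \ {ω | S u ω = 1}) \ {ω | S u ω = 2} = E ∩ {ω | S u ω = 3} := by
      ext ω
      simp only [Set.mem_inter_iff, Set.mem_diff, Set.mem_setOf_eq]
      constructor
      · rintro ⟨⟨hE, h1⟩, h2⟩
        exact ⟨hE, by rcases hSval u ω with h | h | h <;> omega⟩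
      · rintro ⟨hE, h3⟩; exact ⟨⟨hE, by omega⟩, by omega⟩
    rw [e2, e3] at h2
    calc (μ E).toReal
        = (μ (E ∩ {ω | S u ω = 1}) + (μ (E ∩ {ω | S u ω = 2})
            + μ (E ∩ {ω | S u ω = 3}))).toReal := by rw [h2, h1]
      _ = _ := by
          rw [ENNReal.toReal_add (by finiteness) (by finiteness),
            ENNReal.toReal_add (by finiteness) (by finiteness)]
          ring
  -- null difference lemma
  have hnull : ∀ E F : Set Ω, MeasurableSet F → μ (E \ F) = 0 → μ E = μ (E ∩ F) := by
    intro E F hF h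
    rw [← measure_inter_add_diff E hF, h, add_zero]
  -- absorbing chains
  have habs2' : ∀ a b, a ≤ b → μ ({ω | S a ω = 2} \ {ω | S b ω = 2}) = 0 := by
    intro a b hab
    induction b, hab using Nat.le_induction with
    | base => simp
    | succ b hab ih =>
      have hsub : {ω | S a ω = 2} \ {ω | S (b + 1) ω = 2} ⊆
          ({ω | S a ω = 2} \ {ω | S b ω = 2}) ∪ ({ω | S b ω = 2} \ {ω | S (b + 1) ω = 2}) := by
        rintro ω ⟨h1, h2⟩
        by_cases hb : S b ω = 2
        · exact Or.inr ⟨hb, h2⟩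
        · exact Or.inl ⟨h1, hb⟩
      exact measure_mono_null hsub (measure_union_null ih (habs2 b))
  have habs3' : ∀ a b, a ≤ b → μ ({ω | S a ω = 3} \ {ω | S b ω = 3}) = 0 := by
    intro a b hab
    induction b, hab using Nat.le_induction with
    | base => simp
    | succ b hab ih =>
      have hsub : {ω | S a ω = 3} \ {ω | S (b + 1) ω = 3} ⊆
          ({ω | S a ω = 3} \ {ω | S b ω = 3}) ∪ ({ω | S b ω = 3} \ {ω | S (b + 1) ω = 3}) := by
        rintro ω ⟨h1, h2⟩
        by_cases hb : S b ω = 3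
        · exact Or.inr ⟨hb, h2⟩
        · exact Or.inl ⟨h1, hb⟩
      exact measure_mono_null hsub (measure_union_null ih (habs3 b))
  -- set-of-and rewriting
  have hsetand : ∀ t (j : ℕ), {ω | S t ω = 1 ∧ S (t + 1) ω = j}
      = {ω | S t ω = 1} ∩ {ω | S (t + 1) ω = j} := fun t j => rfl
  -- measure of state 1 at time t
  have hA : ∀ t, (μ {ω | S t ω = 1}).toReal = π * ∏ i ∈ Finset.range t, p11 i := by
    intro t
    induction t with
    | zero => simpa using hinit1
    | succ t ih =>
      -- {S (t+1) = 1} \ {S t = 1} is null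
      have hdiffnull : μ ({ω | S (t + 1) ω = 1} \ {ω | S t ω = 1}) = 0 := by
        have hsub : {ω | S (t + 1) ω = 1} \ {ω | S t ω = 1} ⊆
            ({ω | S t ω = 2} \ {ω | S (t + 1) ω = 2})
            ∪ ({ω | S t ω = 3} \ {ω | S (t + 1) ω = 3}) := by
          rintro ω ⟨h1, h2⟩
          simp only [Set.mem_setOf_eq] at h1 h2
          rcases hSval t ω with h | h | h
          · exact absurd h h2
          · exact Or.inl ⟨h, by simp only [Set.mem_setOf_eq]; omega⟩
          · exact Or.inr ⟨h, by simp only [Set.mem_setOf_eq]; omega⟩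
        exact measure_mono_null hsub (measure_union_null (habs2 t) (habs3 t))
      have h1 : μ {ω | S (t + 1) ω = 1}
          = μ ({ω | S t ω = 1} ∩ {ω | S (t + 1) ω = 1}) := by
        rw [hnull _ _ (hm t 1) hdiffnull, Set.inter_comm]
      have hs := hsplit (t + 1) {ω | S t ω = 1}
      rw [← hsetand t 2, ← hsetand t 3] at hs
      rw [htrans12 t, htrans13 t, ih] at hs
      have : (μ {ω | S (t + 1) ω = 1}).toReal
          = (μ ({ω | S t ω = 1} ∩ {ω | S (t + 1) ω = 1})).toReal := by rw [h1]
      rw [this]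
      rw [Finset.prod_range_succ, hp11 t]
      nlinarith [hs]
  -- measure of state 2 at time t
  have hB : ∀ t, (μ {ω | S t ω = 2}).toReal
      = (1 - π) + π * ∑ s ∈ Finset.range t, p12 s * ∏ i ∈ Finset.range s, p11 i := by
    intro t
    induction t with
    | zero =>
      have hs := hsplit 0 (Set.univ : Set Ω)
      simp only [Set.univ_inter, measure_univ, ENNReal.toReal_one] at hs
      rw [hinit1, hinit3] at hs
      simp only [ENNReal.toReal_zero] at hs
      simp only [Finset.range_zero, Finset.sum_empty, mul_zero, add_zero]
      linarith
    | succ t ih =>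
      have hs := hsplit t {ω | S (t + 1) ω = 2}
      -- third term null
      have h3 : μ ({ω | S (t + 1) ω = 2} ∩ {ω | S t ω = 3}) = 0 := by
        apply measure_mono_null (t := {ω | S t ω = 3} \ {ω | S (t + 1) ω = 3})
        · rintro ω ⟨h1, h2⟩
          exact ⟨h2, by simp only [Set.mem_setOf_eq] at h1 ⊢; omega⟩
        · exact habs3 t
      -- second term equals μ (B t)
      have h2 : μ ({ω | S (t + 1) ω = 2} ∩ {ω | S t ω = 2}) = μ {ω | S t ω = 2} := by
        rw [Set.inter_comm]
        exact (hnull _ _ (hm (t + 1) 2) (habs2 t)).symm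
      -- first term
      have h1 : (μ ({ω | S (t + 1) ω = 2} ∩ {ω | S t ω = 1})).toReal
          = p12 t * (μ {ω | S t ω = 1}).toReal := by
        rw [Set.inter_comm, ← hsetand t 2]; exact htrans12 t
      rw [h1, h2, h3] at hs
      simp only [ENNReal.toReal_zero, add_zero] at hs
      rw [hs, ih, hA t, Finset.sum_range_succ]
      ring
  -- numerator
  have hnum : (μ ({ω | S r ω = 1 ∧ S (r + 1) ω = 2} ∩ {ω | S (Y + 1) ω ≠ 3})).toReal
      = π * p12 r * ∏ t ∈ Finset.range r, p11 t := by
    have hdn : μ ({ω | S r ω = 1 ∧ S (r + 1) ω = 2} \ {ω | S (Y + 1) ω ≠ 3}) = 0 := by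
      apply measure_mono_null (t := {ω | S (r + 1) ω = 2} \ {ω | S (Y + 1) ω = 2})
      · rintro ω ⟨h1, h2⟩
        simp only [Set.mem_setOf_eq, not_not] at h1 h2
        exact ⟨h1.2, by simp only [Set.mem_setOf_eq]; omega⟩
      · exact habs2' (r + 1) (Y + 1) (by omega)
    have ecompl : {ω | S (Y + 1) ω ≠ 3} = {ω | S (Y + 1) ω = 3}ᶜ := rfl
    rw [ecompl, ← hnull _ _ ((hm (Y + 1) 3).compl) hdn, htrans12 r, hA r]
    ring
  -- denominator
  have hden : (μ {ω | S (Y + 1) ω ≠ 3}).toReal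
      = (1 - π) + π * ∏ t ∈ Finset.range (Y + 1), p11 t
        + π * ∑ s ∈ Finset.range (Y + 1), p12 s * ∏ t ∈ Finset.range s, p11 t := by
    have hs := hsplit (Y + 1) {ω | S (Y + 1) ω ≠ 3}
    have e1 : {ω | S (Y + 1) ω ≠ 3} ∩ {ω | S (Y + 1) ω = 1} = {ω | S (Y + 1) ω = 1} := by
      ext ω; simp only [Set.mem_inter_iff, Set.mem_setOf_eq]
      constructor
      · exact fun h => h.2
      · intro h; exact ⟨by omega, h⟩
    have e2 : {ω | S (Y + 1) ω ≠ 3} ∩ {ω | S (Y + 1) ω = 2} = {ω | S (Y + 1) ω = 2} := by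
      ext ω; simp only [Set.mem_inter_iff, Set.mem_setOf_eq]
      constructor
      · exact fun h => h.2
      · intro h; exact ⟨by omega, h⟩
    have e3 : {ω | S (Y + 1) ω ≠ 3} ∩ {ω | S (Y + 1) ω = 3} = ∅ := by
      ext ω; simp only [Set.mem_inter_iff, Set.mem_setOf_eq, Set.mem_empty_iff_false]
      tauto
    rw [e1, e2, e3] at hs
    simp only [measure_empty, ENNReal.toReal_zero, add_zero] at hs
    rw [hs, hA (Y + 1), hB (Y + 1)]
    ring
  rw [hnum, hden]
end

section
/- Under the stated assumptions, for every Y ∈ ℕ with D := μ(S_(Y+1) ≠ 3) > 0, the conditional probability of still being at risk at time Y+1, given that no move has occurred by the end of interval (Y, Y+1], equals the E-step quantity Q(∞) of the EM algorithm: μ(S_(Y+1) = 1 | S_(Y+1) ≠ 3) = (π · ∏_{t=0}^{Y} p11(t)) / ((1 − π) + π · ∏_{t=0}^{Y} p11(t) + π · ∑_{s=0}^{Y} p12(s) · ∏_{t=0}^{s-1} p11(t)). -/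
open MeasureTheory Finset Filter

theorem EM_weight_Q_infty
    {Ω : Type*} [MeasurableSpace Ω] (μ : Measure Ω) [IsProbabilityMeasure μ]
    (S : ℕ → Ω → ℕ) (hSmeas : ∀ t, Measurable (S t))
    (hSval : ∀ t ω, S t ω = 1 ∨ S t ω = 2 ∨ S t ω = 3)
    (π : ℝ) (hπ0 : 0 ≤ π) (hπ1 : π ≤ 1)
    (p12 p13 : ℕ → ℝ)
    (hp12 : ∀ t, 0 ≤ p12 t) (hp13 : ∀ t, 0 ≤ p13 t)
    (hsum : ∀ t, p12 t + p13 t ≤ 1)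
    (p11 : ℕ → ℝ) (hp11 : ∀ t, p11 t = 1 - p12 t - p13 t)
    (hinit1 : (μ {ω | S 0 ω = 1}).toReal = π)
    (hinit3 : μ {ω | S 0 ω = 3} = 0)
    (habs2 : ∀ t, μ ({ω | S t ω = 2} \ {ω | S (t + 1) ω = 2}) = 0)
    (habs3 : ∀ t, μ ({ω | S t ω = 3} \ {ω | S (t + 1) ω = 3}) = 0)
    (htrans12 : ∀ t, (μ {ω | S t ω = 1 ∧ S (t + 1) ω = 2}).toReal
      = p12 t * (μ {ω | S t ω = 1}).toReal)
    (htrans13 : ∀ t, (μ {ω | S t ω = 1 ∧ S (t + 1) ω = 3}).toReal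
      = p13 t * (μ {ω | S t ω = 1}).toReal)
    (Y : ℕ) (hD : 0 < (μ {ω | S (Y + 1) ω ≠ 3}).toReal) :
    (μ ({ω | S (Y + 1) ω = 1} ∩ {ω | S (Y + 1) ω ≠ 3})).toReal
        / (μ {ω | S (Y + 1) ω ≠ 3}).toReal
      = (π * ∏ t ∈ Finset.range (Y + 1), p11 t)
        / ((1 - π) + π * ∏ t ∈ Finset.range (Y + 1), p11 t
          + π * ∑ s ∈ Finset.range (Y + 1), p12 s * ∏ t ∈ Finset.range s, p11 t) := by
  have hms : ∀ t (j : ℕ), MeasurableSet {ω | S t ω = j} :=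
    fun t j => (hSmeas t) (measurableSet_singleton j)
  have hdisj : ∀ t (i j : ℕ), i ≠ j →
      Disjoint {ω | S t ω = i} {ω | S t ω = j} := by
    intro t i j hij
    rw [Set.disjoint_left]
    intro ω h1 h2
    exact hij (h1.symm.trans h2)
  -- partition of any measurable set by the state at time t
  have hpart : ∀ t (A : Set Ω), MeasurableSet A →
      (μ A).toReal = (μ (A ∩ {ω | S t ω = 1})).toReal
        + (μ (A ∩ {ω | S t ω = 2})).toReal + (μ (A ∩ {ω | S t ω = 3})).toReal := by
    intro t A hA
    have hcover : A = (A ∩ {ω | S t ω = 1}) ∪ (A ∩ {ω | S t ω = 2})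
        ∪ (A ∩ {ω | S t ω = 3}) := by
      ext ω
      simp only [Set.mem_union, Set.mem_inter_iff, Set.mem_setOf_eq]
      rcases hSval t ω with h | h | h <;> tauto
    have h12 : Disjoint (A ∩ {ω | S t ω = 1}) (A ∩ {ω | S t ω = 2}) :=
      ((hdisj t 1 2 (by norm_num)).mono Set.inter_subset_right Set.inter_subset_right)
    have h123 : Disjoint ((A ∩ {ω | S t ω = 1}) ∪ (A ∩ {ω | S t ω = 2}))
        (A ∩ {ω | S t ω = 3}) := by
      refine Disjoint.union_left ?_ ?_
      · exact (hdisj t 1 3 (by norm_num)).mono Set.inter_subset_right Set.inter_subset_right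
      · exact (hdisj t 2 3 (by norm_num)).mono Set.inter_subset_right Set.inter_subset_right
    have hm1 := hA.inter (hms t 1)
    have hm2 := hA.inter (hms t 2)
    have hm3 := hA.inter (hms t 3)
    conv_lhs => rw [hcover]
    rw [measure_union h123 hm3, measure_union h12 hm2,
      ENNReal.toReal_add (by finiteness) (by finiteness),
      ENNReal.toReal_add (by finiteness) (by finiteness)]
  -- intersections as ∧-sets
  have hand : ∀ t (i j : ℕ),
      {ω | S t ω = i} ∩ {ω | S (t+1) ω = j} = {ω | S t ω = i ∧ S (t+1) ω = j} := by
    intro t i j; ext ω; simp [Set.mem_inter_iff]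
  -- null transitions out of absorbing states
  have hnull3 : ∀ t (j : ℕ), j ≠ 3 → μ ({ω | S (t+1) ω = j} ∩ {ω | S t ω = 3}) = 0 := by
    intro t j hj
    refine measure_mono_null ?_ (habs3 t)
    intro ω ⟨h1, h2⟩
    exact ⟨h2, fun h3 => hj (h1.symm.trans h3)⟩
  have hnull2 : ∀ t (j : ℕ), j ≠ 2 → μ ({ω | S (t+1) ω = j} ∩ {ω | S t ω = 2}) = 0 := by
    intro t j hj
    refine measure_mono_null ?_ (habs2 t)
    intro ω ⟨h1, h2⟩
    exact ⟨h2, fun h3 => hj (h1.symm.trans h3)⟩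
  -- stay-in-1 probability
  have hstay1 : ∀ t, (μ ({ω | S (t+1) ω = 1} ∩ {ω | S t ω = 1})).toReal
      = p11 t * (μ {ω | S t ω = 1}).toReal := by
    intro t
    have h := hpart (t+1) {ω | S t ω = 1} (hms t 1)
    rw [Set.inter_comm _ {ω | S t ω = 1}]
    have e2 : {ω | S t ω = 1} ∩ {ω | S (t+1) ω = 2} = {ω | S t ω = 1 ∧ S (t+1) ω = 2} :=
      hand t 1 2
    have e3 : {ω | S t ω = 1} ∩ {ω | S (t+1) ω = 3} = {ω | S t ω = 1 ∧ S (t+1) ω = 3} :=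
      hand t 1 3
    rw [e2, e3, htrans12 t, htrans13 t] at h
    rw [hp11 t]; linarith
  -- recursion for state 1
  have hrec1 : ∀ t, (μ {ω | S (t+1) ω = 1}).toReal = p11 t * (μ {ω | S t ω = 1}).toReal := by
    intro t
    have h := hpart t {ω | S (t+1) ω = 1} (hms (t+1) 1)
    rw [hnull2 t 1 (by norm_num), hnull3 t 1 (by norm_num)] at h
    simpa [hstay1 t] using h
  -- stay-in-2
  have hstay2 : ∀ t, (μ ({ω | S (t+1) ω = 2} ∩ {ω | S t ω = 2})).toReal
      = (μ {ω | S t ω = 2}).toReal := by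
    intro t
    have hsplit : μ {ω | S t ω = 2}
        = μ ({ω | S t ω = 2} ∩ {ω | S (t+1) ω = 2})
          + μ ({ω | S t ω = 2} \ {ω | S (t+1) ω = 2}) := by
      rw [← measure_inter_add_diff _ (hms (t+1) 2)]
    rw [habs2 t, add_zero] at hsplit
    rw [Set.inter_comm, ← hsplit]
  -- recursion for state 2
  have hrec2 : ∀ t, (μ {ω | S (t+1) ω = 2}).toReal
      = (μ {ω | S t ω = 2}).toReal + p12 t * (μ {ω | S t ω = 1}).toReal := by
    intro t
    have h := hpart t {ω | S (t+1) ω = 2} (hms (t+1) 2)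
    rw [hnull3 t 2 (by norm_num)] at h
    have e1 : {ω | S (t+1) ω = 2} ∩ {ω | S t ω = 1} = {ω | S t ω = 1 ∧ S (t+1) ω = 2} := by
      ext ω; simp [Set.mem_inter_iff, and_comm]
    rw [e1, htrans12 t, hstay2 t] at h
    simp at h
    linarith
  -- initial value for state 2
  have hinit2 : (μ {ω | S 0 ω = 2}).toReal = 1 - π := by
    have h := hpart 0 Set.univ MeasurableSet.univ
    simp only [Set.univ_inter] at h
    rw [hinit1, hinit3] at h
    simp at h
    linarith
  -- closed forms
  have hcf1 : ∀ t, (μ {ω | S t ω = 1}).toReal = π * ∏ i ∈ Finset.range t, p11 i := by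
    intro t
    induction t with
    | zero => simpa using hinit1
    | succ n ih =>
        rw [hrec1 n, ih, Finset.prod_range_succ]; ring
  have hcf2 : ∀ t, (μ {ω | S t ω = 2}).toReal
      = (1 - π) + π * ∑ s ∈ Finset.range t, p12 s * ∏ i ∈ Finset.range s, p11 i := by
    intro t
    induction t with
    | zero => simpa using hinit2
    | succ n ih =>
        rw [hrec2 n, ih, hcf1 n, Finset.sum_range_succ]; ring
  -- the denominator set
  have hne3 : {ω | S (Y+1) ω ≠ 3} = {ω | S (Y+1) ω = 1} ∪ {ω | S (Y+1) ω = 2} := by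
    ext ω
    simp only [Set.mem_setOf_eq, Set.mem_union]
    rcases hSval (Y+1) ω with h | h | h <;> simp [h]
  have hnum : {ω | S (Y + 1) ω = 1} ∩ {ω | S (Y + 1) ω ≠ 3} = {ω | S (Y+1) ω = 1} := by
    apply Set.inter_eq_left.mpr
    intro ω h
    simp only [Set.mem_setOf_eq] at *
    omega
  have hden : (μ {ω | S (Y + 1) ω ≠ 3}).toReal
      = (μ {ω | S (Y+1) ω = 1}).toReal + (μ {ω | S (Y+1) ω = 2}).toReal := by
    rw [hne3, measure_union (hdisj (Y+1) 1 2 (by norm_num)) (hms (Y+1) 2),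
      ENNReal.toReal_add (by finiteness) (by finiteness)]
  rw [hnum, hden, hcf1 (Y+1), hcf2 (Y+1)]
  ring_nf
end

section
/- Under the stated assumptions, the map t ↦ μ(S_t = 3) is nondecreasing, the series ∑_{s=0}^{∞} p13(s) · ∏_{u=0}^{s-1} p11(u) converges to a sum in [0,1], and μ(S_t = 3) converges, as t → ∞, to π times that sum. -/
open MeasureTheory Finset Filter

theorem mover_probability_limit
    {Ω : Type*} [MeasurableSpace Ω] (μ : Measure Ω) [IsProbabilityMeasure μ]
    (S : ℕ → Ω → ℕ) (hSmeas : ∀ t, Measurable (S t))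
    (hSval : ∀ t ω, S t ω = 1 ∨ S t ω = 2 ∨ S t ω = 3)
    (π : ℝ) (hπ0 : 0 ≤ π) (hπ1 : π ≤ 1)
    (p12 p13 : ℕ → ℝ)
    (hp12 : ∀ t, 0 ≤ p12 t) (hp13 : ∀ t, 0 ≤ p13 t)
    (hsum : ∀ t, p12 t + p13 t ≤ 1)
    (p11 : ℕ → ℝ) (hp11 : ∀ t, p11 t = 1 - p12 t - p13 t)
    (hinit1 : (μ {ω | S 0 ω = 1}).toReal = π)
    (hinit3 : μ {ω | S 0 ω = 3} = 0)
    (habs2 : ∀ t, μ ({ω | S t ω = 2} \ {ω | S (t + 1) ω = 2}) = 0)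
    (habs3 : ∀ t, μ ({ω | S t ω = 3} \ {ω | S (t + 1) ω = 3}) = 0)
    (htrans12 : ∀ t, (μ {ω | S t ω = 1 ∧ S (t + 1) ω = 2}).toReal
      = p12 t * (μ {ω | S t ω = 1}).toReal)
    (htrans13 : ∀ t, (μ {ω | S t ω = 1 ∧ S (t + 1) ω = 3}).toReal
      = p13 t * (μ {ω | S t ω = 1}).toReal) :
    Monotone (fun t : ℕ => (μ {ω | S t ω = 3}).toReal) ∧
      ∃ L : ℝ, HasSum (fun s : ℕ => p13 s * ∏ u ∈ Finset.range s, p11 u) L ∧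
        0 ≤ L ∧ L ≤ 1 ∧
        Tendsto (fun t : ℕ => (μ {ω | S t ω = 3}).toReal) atTop (nhds (π * L)) := by
  have hms : ∀ t k, MeasurableSet {ω | S t ω = k} := fun t k =>
    (hSmeas t) (measurableSet_singleton k)
  have hms2 : ∀ t (a b : ℕ), MeasurableSet {ω | S t ω = a ∧ S (t + 1) ω = b} := fun t a b =>
    (hms t a).inter (hms (t + 1) b)
  have hfin : ∀ X : Set Ω, μ X ≠ ⊤ := fun X => measure_ne_top μ X
  -- splitting on previous state
  have split1 : ∀ t j, μ {ω | S (t + 1) ω = j}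
      = μ {ω | S t ω = 1 ∧ S (t + 1) ω = j} + μ {ω | S t ω = 2 ∧ S (t + 1) ω = j}
        + μ {ω | S t ω = 3 ∧ S (t + 1) ω = j} := by
    intro t j
    have hset : {ω | S (t + 1) ω = j}
        = ({ω | S t ω = 1 ∧ S (t + 1) ω = j} ∪ {ω | S t ω = 2 ∧ S (t + 1) ω = j})
          ∪ {ω | S t ω = 3 ∧ S (t + 1) ω = j} := by
      ext ω
      simp only [Set.mem_setOf_eq, Set.mem_union]
      rcases hSval t ω with h | h | h <;> simp [h]
    have d2 : Disjoint {ω | S t ω = 1 ∧ S (t + 1) ω = j} {ω | S t ω = 2 ∧ S (t + 1) ω = j} :=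
      Set.disjoint_left.mpr (by rintro ω ⟨h1, -⟩ ⟨h2, -⟩; omega)
    have d3 : Disjoint ({ω | S t ω = 1 ∧ S (t + 1) ω = j} ∪ {ω | S t ω = 2 ∧ S (t + 1) ω = j})
        {ω | S t ω = 3 ∧ S (t + 1) ω = j} :=
      Set.disjoint_left.mpr (by rintro ω (⟨h1, -⟩ | ⟨h1, -⟩) ⟨h2, -⟩ <;> omega)
    rw [hset, measure_union d3 (hms2 t 3 j), measure_union d2 (hms2 t 2 j)]
  -- splitting on next state
  have split2 : ∀ t, μ {ω | S t ω = 1}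
      = μ {ω | S t ω = 1 ∧ S (t + 1) ω = 1} + μ {ω | S t ω = 1 ∧ S (t + 1) ω = 2}
        + μ {ω | S t ω = 1 ∧ S (t + 1) ω = 3} := by
    intro t
    have hset : {ω | S t ω = 1}
        = ({ω | S t ω = 1 ∧ S (t + 1) ω = 1} ∪ {ω | S t ω = 1 ∧ S (t + 1) ω = 2})
          ∪ {ω | S t ω = 1 ∧ S (t + 1) ω = 3} := by
      ext ω
      simp only [Set.mem_setOf_eq, Set.mem_union]
      rcases hSval (t + 1) ω with h | h | h <;> simp [h]
    have d2 : Disjoint {ω | S t ω = 1 ∧ S (t + 1) ω = 1} {ω | S t ω = 1 ∧ S (t + 1) ω = 2} :=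
      Set.disjoint_left.mpr (by rintro ω ⟨-, h1⟩ ⟨-, h2⟩; omega)
    have d3 : Disjoint ({ω | S t ω = 1 ∧ S (t + 1) ω = 1} ∪ {ω | S t ω = 1 ∧ S (t + 1) ω = 2})
        {ω | S t ω = 1 ∧ S (t + 1) ω = 3} :=
      Set.disjoint_left.mpr (by rintro ω (⟨-, h1⟩ | ⟨-, h1⟩) ⟨-, h2⟩ <;> omega)
    rw [hset, measure_union d3 (hms2 t 1 3), measure_union d2 (hms2 t 1 2)]
  -- null transitions
  have n23 : ∀ t, μ {ω | S t ω = 2 ∧ S (t + 1) ω = 3} = 0 := by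
    intro t
    refine measure_mono_null ?_ (habs2 t)
    rintro ω ⟨h1, h2⟩
    exact ⟨h1, by simp [h2]⟩
  have n21 : ∀ t, μ {ω | S t ω = 2 ∧ S (t + 1) ω = 1} = 0 := by
    intro t
    refine measure_mono_null ?_ (habs2 t)
    rintro ω ⟨h1, h2⟩
    exact ⟨h1, by simp [h2]⟩
  have n31 : ∀ t, μ {ω | S t ω = 3 ∧ S (t + 1) ω = 1} = 0 := by
    intro t
    refine measure_mono_null ?_ (habs3 t)
    rintro ω ⟨h1, h2⟩
    exact ⟨h1, by simp [h2]⟩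
  have n33 : ∀ t, μ {ω | S t ω = 3 ∧ S (t + 1) ω = 3} = μ {ω | S t ω = 3} := by
    intro t
    have h := measure_inter_add_diff (μ := μ) {ω | S t ω = 3} (hms (t + 1) 3)
    rw [habs3 t, add_zero] at h
    exact h
  -- real recurrences
  have mrec : ∀ t, (μ {ω | S (t + 1) ω = 3}).toReal
      = (μ {ω | S t ω = 3}).toReal + p13 t * (μ {ω | S t ω = 1}).toReal := by
    intro t
    have h : μ {ω | S (t + 1) ω = 3}
        = μ {ω | S t ω = 1 ∧ S (t + 1) ω = 3} + μ {ω | S t ω = 3} := by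
      rw [split1 t 3, n23 t, add_zero, n33 t]
    rw [h, ENNReal.toReal_add (hfin _) (hfin _), htrans13 t]
    ring
  have a11 : ∀ t, (μ {ω | S t ω = 1 ∧ S (t + 1) ω = 1}).toReal
      = p11 t * (μ {ω | S t ω = 1}).toReal := by
    intro t
    have h := split2 t
    have h' : (μ {ω | S t ω = 1}).toReal
        = (μ {ω | S t ω = 1 ∧ S (t + 1) ω = 1}).toReal
          + (μ {ω | S t ω = 1 ∧ S (t + 1) ω = 2}).toReal
          + (μ {ω | S t ω = 1 ∧ S (t + 1) ω = 3}).toReal := by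
      rw [h, ENNReal.toReal_add (by finiteness) (hfin _), ENNReal.toReal_add (hfin _) (hfin _)]
    rw [htrans12 t, htrans13 t] at h'
    rw [hp11 t]
    linarith
  have arec : ∀ t, (μ {ω | S (t + 1) ω = 1}).toReal = p11 t * (μ {ω | S t ω = 1}).toReal := by
    intro t
    have h : μ {ω | S (t + 1) ω = 1} = μ {ω | S t ω = 1 ∧ S (t + 1) ω = 1} := by
      rw [split1 t 1, n21 t, n31 t, add_zero, add_zero]
    rw [h, a11 t]
  -- closed forms
  have aform : ∀ t, (μ {ω | S t ω = 1}).toReal = π * ∏ u ∈ Finset.range t, p11 u := by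
    intro t
    induction t with
    | zero => simp [hinit1]
    | succ n ih => rw [arec n, ih, Finset.prod_range_succ]; ring
  have mform : ∀ t, (μ {ω | S t ω = 3}).toReal
      = π * ∑ s ∈ Finset.range t, p13 s * ∏ u ∈ Finset.range s, p11 u := by
    intro t
    induction t with
    | zero => simp [hinit3]
    | succ n ih => rw [mrec n, ih, aform n, Finset.sum_range_succ]; ring
  -- bounds on p11
  have hp11nn : ∀ t, 0 ≤ p11 t := by intro t; rw [hp11 t]; have := hsum t; linarith
  have hprodnn : ∀ t, 0 ≤ ∏ u ∈ Finset.range t, p11 u :=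
    fun t => Finset.prod_nonneg fun u _ => hp11nn u
  have hterm_nn : ∀ s, 0 ≤ p13 s * ∏ u ∈ Finset.range s, p11 u :=
    fun s => mul_nonneg (hp13 s) (hprodnn s)
  have hbound : ∀ t, ∑ s ∈ Finset.range t, p13 s * ∏ u ∈ Finset.range s, p11 u
      ≤ 1 - ∏ u ∈ Finset.range t, p11 u := by
    intro t
    induction t with
    | zero => simp
    | succ n ih =>
      rw [Finset.sum_range_succ, Finset.prod_range_succ]
      have h1 : p13 n ≤ 1 - p11 n := by rw [hp11 n]; have := hp12 n; linarith
      nlinarith [hprodnn n, hp13 n]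
  have hbound1 : ∀ t, ∑ s ∈ Finset.range t, p13 s * ∏ u ∈ Finset.range s, p11 u ≤ 1 :=
    fun t => (hbound t).trans (by linarith [hprodnn t])
  have hsummable : Summable (fun s : ℕ => p13 s * ∏ u ∈ Finset.range s, p11 u) :=
    summable_of_sum_range_le hterm_nn hbound1
  set L : ℝ := ∑' s, p13 s * ∏ u ∈ Finset.range s, p11 u with hLdef
  have hHS : HasSum (fun s : ℕ => p13 s * ∏ u ∈ Finset.range s, p11 u) L := hsummable.hasSum
  constructor
  · apply monotone_nat_of_le_succ
    intro t
    rw [mrec t]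
    have := mul_nonneg (hp13 t) (ENNReal.toReal_nonneg (a := μ {ω | S t ω = 1}))
    linarith
  · refine ⟨L, hHS, tsum_nonneg hterm_nn, Summable.tsum_le_of_sum_range_le hsummable hbound1, ?_⟩
    have h1 : Tendsto (fun t : ℕ => ∑ s ∈ Finset.range t, p13 s * ∏ u ∈ Finset.range s, p11 u)
        atTop (nhds L) := hHS.tendsto_sum_nat
    have h2 := h1.const_mul π
    exact Tendsto.congr (fun t => (mform t).symm) h2
end

section
/- Let d ∈ ℕ and let C ⊆ ℝ^d be a set of covariate vectors whose ℝ-linear span is all of ℝ^d. Let w2, w3, w2', w3' ∈ ℝ^d. If for every c ∈ C both exp(⟨w2, c⟩)/(1 + exp(⟨w2, c⟩) + exp(⟨w3, c⟩)) = exp(⟨w2', c⟩)/(1 + exp(⟨w2', c⟩) + exp(⟨w3', c⟩)) and exp(⟨w3, c⟩)/(1 + exp(⟨w2, c⟩) + exp(⟨w3, c⟩)) = exp(⟨w3', c⟩)/(1 + exp(⟨w2', c⟩) + exp(⟨w3', c⟩)), then w2 = w2' and w3 = w3'. (Identifiability of the multinomial logistic transition model.) -/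
open Real

lemma exp_ratio_eq {a b a' b' : ℝ} (ha : 0 < a) (hb : 0 < b) (ha' : 0 < a') (hb' : 0 < b')
    (h2 : a / (1 + a + b) = a' / (1 + a' + b'))
    (h3 : b / (1 + a + b) = b' / (1 + a' + b')) : a = a' ∧ b = b' := by
  have hD : (1 + a + b) ≠ 0 := by positivity
  have hD' : (1 + a' + b') ≠ 0 := by positivity
  field_simp at h2 h3
  have hsum : a + b = a' + b' := by nlinarith
  constructor <;> nlinarith

lemma inner_eq_of_span {d : ℕ} (C : Set (EuclideanSpace ℝ (Fin d)))
    (hC : Submodule.span ℝ C = ⊤) (w w' : EuclideanSpace ℝ (Fin d))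
    (h : ∀ c ∈ C, (inner ℝ w c : ℝ) = inner ℝ w' c) : w = w' := by
  have hv : ∀ c ∈ C, (inner ℝ (w - w') c : ℝ) = 0 := by
    intro c hc
    rw [inner_sub_left, h c hc, sub_self]
  have hall : ∀ x : EuclideanSpace ℝ (Fin d), (inner ℝ (w - w') x : ℝ) = 0 := by
    intro x
    have hx : x ∈ Submodule.span ℝ C := by rw [hC]; trivial
    induction hx using Submodule.span_induction with
    | mem c hc => exact hv c hc
    | zero => simp
    | add x y _ _ hx hy => rw [inner_add_right, hx, hy, add_zero]
    | smul r x _ hx => rw [inner_smul_right, hx, mul_zero]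
  have := hall (w - w')
  rw [inner_self_eq_zero] at this
  exact sub_eq_zero.mp this

/-- Identifiability of the multinomial logistic transition model: if the covariate set
spans `ℝ^d`, then the softmax transition probabilities determine the parameter vectors. -/
theorem multinomial_logistic_identifiability
    (d : ℕ) (C : Set (EuclideanSpace ℝ (Fin d)))
    (hC : Submodule.span ℝ C = ⊤)
    (w2 w3 w2' w3' : EuclideanSpace ℝ (Fin d))
    (h2 : ∀ c ∈ C,
      Real.exp (inner ℝ w2 c : ℝ) / (1 + Real.exp (inner ℝ w2 c : ℝ) + Real.exp (inner ℝ w3 c : ℝ))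
        = Real.exp (inner ℝ w2' c : ℝ)
          / (1 + Real.exp (inner ℝ w2' c : ℝ) + Real.exp (inner ℝ w3' c : ℝ)))
    (h3 : ∀ c ∈ C,
      Real.exp (inner ℝ w3 c : ℝ) / (1 + Real.exp (inner ℝ w2 c : ℝ) + Real.exp (inner ℝ w3 c : ℝ))
        = Real.exp (inner ℝ w3' c : ℝ)
          / (1 + Real.exp (inner ℝ w2' c : ℝ) + Real.exp (inner ℝ w3' c : ℝ))) :
    w2 = w2' ∧ w3 = w3' := by
  have key : ∀ c ∈ C, (inner ℝ w2 c : ℝ) = inner ℝ w2' c ∧ (inner ℝ w3 c : ℝ) = inner ℝ w3' c := by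
    intro c hc
    obtain ⟨ha, hb⟩ := exp_ratio_eq (Real.exp_pos _) (Real.exp_pos _) (Real.exp_pos _)
      (Real.exp_pos _) (h2 c hc) (h3 c hc)
    exact ⟨Real.exp_injective ha, Real.exp_injective hb⟩
  exact ⟨inner_eq_of_span C hC w2 w2' (fun c hc => (key c hc).1),
    inner_eq_of_span C hC w3 w3' (fun c hc => (key c hc).2)⟩
end
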